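/- For every positive integer a, the sum over r from 1 to a and over all compositions (k_1,...,k_r) of a into positive parts of a!/(k_1!...k_r!) · ∏_{l=2}^{r} k_{l-1}^{k_l}, multiplied by C(N,a), equals (a+1)^{a-1} · C(N,a). -/

import Mathlib

open Finset

/-- The chain product `∏_{l=2}^{r} k_{l-1}^{k_l}` (interpreted as `1` when `r = 1`). -/
def chainProd {r : ℕ} (k : Fin r → ℕ) : ℕ :=
  ∏ i : Fin r, if h : (i : ℕ) + 1 < r then (k i) ^ (k ⟨(i : ℕ) + 1, h⟩) else 1

/-!
Write `chainSum j n` for the weighted sum over compositions `k` of `n`, with weight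
`multinomial k * j ^ k₁ * k₁ ^ k₂ * ⋯`, i.e. as if the composition were preceded by a part `j`;
the theorem is about `chainSum 1 a`. Peeling off the first part `p` gives the recursion
`chainSum j n = ∑ₚ C(n, p) jᵖ chainSum p (n - p)`, whose solution is the Abel-type closed form
`chainSum j n = j (j + n) ^ (n - 1)`: by induction, after `C(n, p) p = n C(n - 1, p - 1)` the
recursion becomes the binomial expansion of `(j + n) ^ (n - 1)`.
-/

lemma sum_Icc_one_eq_sum_range {M : Type*} [AddCommMonoid M] (n : ℕ) (f : ℕ → M) :
    ∑ i ∈ Icc 1 n, f i = ∑ i ∈ range n, f (i + 1) := by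
  rw [← Ico_add_one_right_eq_Icc, sum_Ico_eq_sum_range]
  simp [add_comm]

def compositionTuples (r n : ℕ) : Finset (Fin r → ℕ) :=
  (Nat.antidiagonalTuple r n).filter (fun k => ∀ i, 1 ≤ k i)

@[simp]
lemma mem_compositionTuples {r n : ℕ} {k : Fin r → ℕ} :
    k ∈ compositionTuples r n ↔ ∑ i, k i = n ∧ ∀ i, 1 ≤ k i := by
  rw [compositionTuples, mem_filter, Nat.mem_antidiagonalTuple]

lemma compositionTuples_eq_empty_of_lt {r n : ℕ} (h : n < r) : compositionTuples r n = ∅ := by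
  refine eq_empty_of_forall_notMem fun k hk => h.not_ge ?_
  rw [mem_compositionTuples] at hk
  calc r = ∑ _ : Fin r, 1 := by simp
    _ ≤ n := hk.1 ▸ sum_le_sum fun i _ => hk.2 i

lemma compositionTuples_zero_left {n : ℕ} (hn : n ≠ 0) : compositionTuples 0 n = ∅ :=
  eq_empty_of_forall_notMem fun k hk => hn (by simpa using (mem_compositionTuples.1 hk).1.symm)

lemma compositionTuples_zero_zero : compositionTuples 0 0 = {![]} := by
  ext k; simp [Subsingleton.elim k ![]]

lemma multinomial_univ_cons {r : ℕ} (x : ℕ) (t : Fin r → ℕ) :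
    Nat.multinomial univ (Fin.cons x t : Fin (r + 1) → ℕ)
      = (x + ∑ i, t i).choose x * Nat.multinomial univ t := by
  rw [Fin.univ_succ, Nat.multinomial_cons]
  simp [Nat.multinomial, sum_map, prod_map]

lemma chainProd_cons {r : ℕ} (x : ℕ) (t : Fin (r + 1) → ℕ) :
    chainProd (Fin.cons x t : Fin (r + 2) → ℕ) = x ^ t 0 * chainProd t := by
  rw [chainProd, Fin.prod_univ_succ, chainProd]
  congr 1
  refine prod_congr rfl fun i _ => ?_
  simp only [Fin.val_succ, Nat.add_lt_add_iff_right]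
  split_ifs <;> rfl

lemma sum_compositionTuples_succ {M : Type*} [AddCommMonoid M] {r n : ℕ}
    (f : (Fin (r + 1) → ℕ) → M) :
    ∑ k ∈ compositionTuples (r + 1) n, f k
      = ∑ p ∈ Icc 1 n, ∑ t ∈ compositionTuples r (n - p), f (Fin.cons p t) := by
  rw [sum_sigma']
  refine sum_nbij' (fun k => ⟨k 0, Fin.tail k⟩) (fun x => Fin.cons x.1 x.2) ?_ ?_
    (fun k _ => Fin.cons_self_tail k) (fun x _ => by simp) (fun k _ => by rw [Fin.cons_self_tail])
  · intro k hk
    simp only [mem_sigma, mem_Icc, mem_compositionTuples,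
      Fin.sum_univ_succ, Fin.forall_fin_succ] at hk ⊢
    refine ⟨⟨hk.2.1, by omega⟩, by simp [Fin.tail]; omega, hk.2.2⟩
  · intro x hx
    simp only [mem_sigma, mem_Icc, mem_compositionTuples,
      Fin.sum_univ_succ, Fin.forall_fin_succ, Fin.cons_zero, Fin.cons_succ] at hx ⊢
    exact ⟨by omega, hx.1.1, hx.2.2⟩

lemma multinomial_mul_chainProd_cons_cons {r : ℕ} (j p : ℕ) (t : Fin r → ℕ) :
    Nat.multinomial univ (Fin.cons p t : Fin (r + 1) → ℕ)
        * chainProd (Fin.cons j (Fin.cons p t : Fin (r + 1) → ℕ) : Fin (r + 2) → ℕ)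
      = (p + ∑ i, t i).choose p * j ^ p
          * (Nat.multinomial univ t * chainProd (Fin.cons p t : Fin (r + 1) → ℕ)) := by
  rw [multinomial_univ_cons, chainProd_cons, Fin.cons_zero]
  ring

def chainSum (j n : ℕ) : ℕ :=
  ∑ r ∈ range (n + 1), ∑ k ∈ compositionTuples r n,
    Nat.multinomial univ k * chainProd (Fin.cons j k : Fin (r + 1) → ℕ)

lemma chainSum_eq_sum_range_of_lt (j : ℕ) {n B : ℕ} (h : n < B) :
    chainSum j n = ∑ r ∈ range B, ∑ k ∈ compositionTuples r n,
      Nat.multinomial univ k * chainProd (Fin.cons j k : Fin (r + 1) → ℕ) := by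
  refine sum_subset (range_subset_range.2 h) fun r _ hr => ?_
  rw [compositionTuples_eq_empty_of_lt (by simpa using hr), sum_empty]

@[simp]
lemma chainSum_zero (j : ℕ) : chainSum j 0 = 1 := by
  simp [chainSum, compositionTuples_zero_zero, chainProd]

lemma chainSum_eq_sum_Icc (j : ℕ) {n : ℕ} (hn : n ≠ 0) :
    chainSum j n = ∑ p ∈ Icc 1 n, n.choose p * j ^ p * chainSum p (n - p) := by
  calc chainSum j n
      = ∑ r ∈ range n, ∑ p ∈ Icc 1 n, ∑ t ∈ compositionTuples r (n - p),
          n.choose p * j ^ p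
            * (Nat.multinomial univ t * chainProd (Fin.cons p t : Fin (r + 1) → ℕ)) := by
        rw [chainSum, sum_range_succ', compositionTuples_zero_left hn, sum_empty, add_zero]
        refine sum_congr rfl fun r _ => ?_
        rw [sum_compositionTuples_succ]
        refine sum_congr rfl fun p hp => sum_congr rfl fun t ht => ?_
        rw [multinomial_mul_chainProd_cons_cons, (mem_compositionTuples.1 ht).1,
          Nat.add_sub_cancel' (mem_Icc.1 hp).2]
    _ = ∑ p ∈ Icc 1 n, n.choose p * j ^ p * chainSum p (n - p) := by
        rw [sum_comm]
        refine sum_congr rfl fun p hp => ?_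
        rw [chainSum_eq_sum_range_of_lt p (n := n - p) (B := n) (by rw [mem_Icc] at hp; omega)]
        simp only [mul_sum]

theorem chainSum_succ (j m : ℕ) : chainSum j (m + 1) = j * (j + m + 1) ^ m := by
  induction m using Nat.strong_induction_on generalizing j with
  | _ m ih =>
  have hterm : ∀ q ∈ range m, (m + 1).choose (q + 1) * j ^ (q + 1) * chainSum (q + 1) (m - q)
      = j * (j ^ q * (m + 1) ^ (m - q) * m.choose q) := by
    intro q hq
    obtain ⟨l, rfl⟩ : ∃ l, m = q + l + 1 := ⟨m - q - 1, by simp at hq; omega⟩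
    have hchoose := Nat.add_one_mul_choose_eq (q + l + 1) q
    rw [show q + l + 1 - q = l + 1 by omega, ih l (by omega)]
    linear_combination j ^ (q + 1) * (q + l + 1 + 1) ^ l * hchoose.symm
  rw [chainSum_eq_sum_Icc j (Nat.add_one_ne_zero m), sum_Icc_one_eq_sum_range]
  simp only [Nat.add_sub_add_right]
  rw [sum_range_succ, sum_congr rfl hterm, ← mul_sum, add_assoc, add_pow, sum_range_succ]
  simp only [Nat.cast_id, Nat.sub_self, chainSum_zero, Nat.choose_self, pow_zero, mul_one, one_mul]
  ring

theorem avalanche_count_identity (N a : ℕ) (ha : 1 ≤ a) :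
    (∑ r ∈ Icc 1 a,
        ∑ k ∈ (Nat.antidiagonalTuple r a).filter (fun k => ∀ i, 1 ≤ k i),
          (a.factorial / ∏ i, (k i).factorial) * chainProd k) * N.choose a
      = (a + 1) ^ (a - 1) * N.choose a := by
  obtain ⟨m, rfl⟩ := Nat.exists_eq_add_of_le' ha
  have hsum : (∑ r ∈ Icc 1 (m + 1), ∑ k ∈ compositionTuples r (m + 1),
      ((m + 1).factorial / ∏ i, (k i).factorial) * chainProd k) = chainSum 1 (m + 1) := by
    rw [chainSum, sum_range_succ', compositionTuples_zero_left (Nat.add_one_ne_zero m), sum_empty,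
      add_zero, sum_Icc_one_eq_sum_range]
    refine sum_congr rfl fun r _ => sum_congr rfl fun k hk => ?_
    rw [chainProd_cons, one_pow, one_mul, Nat.multinomial, (mem_compositionTuples.1 hk).1]
  change (∑ r ∈ Icc 1 (m + 1), ∑ k ∈ compositionTuples r (m + 1), _) * _ = _
  rw [hsum, chainSum_succ, Nat.add_sub_cancel]
  ring
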